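/- Let y ∈ 𝒴 and, for each i ∈ {1,…,r}, let y'_i be the vector agreeing with y in every block except block i, where (y'_i)^(i) is the unique minimizer over z ∈ B(F_i) of ⟨∇_i g(y), z − y^(i)⟩ + ‖z − y^(i)‖². Let y* be an optimal solution of (Prox-DSM) closest to y and g* the optimal value. Then (1/r) Σ_{i=1}^r [ ‖y'_i − y*‖² + g(y'_i) − g* ] ≤ ‖y − y*‖² + g(y) − g* + (1/r) ⟨∇g(y), y* − y⟩. -/

import Mathlib

/-!
The block minimizer `y'ᵢ⁽ⁱ⁾` is the projection of `y⁽ⁱ⁾ - ∇ᵢg(y)/2` onto the convex set `B(Fᵢ)`,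
so the obtuse-angle criterion for projections yields the three-point inequality
`⟪∇ᵢg(y), y'ᵢ⁽ⁱ⁾ - y⁽ⁱ⁾⟫ + ‖y'ᵢ⁽ⁱ⁾ - y⁽ⁱ⁾‖² + ‖y*⁽ⁱ⁾ - y'ᵢ⁽ⁱ⁾‖² ≤ ⟪∇ᵢg(y), y*⁽ⁱ⁾ - y⁽ⁱ⁾⟫ + ‖y*⁽ⁱ⁾ - y⁽ⁱ⁾‖²`.
Because `y'ᵢ` differs from `y` in block `i` only and `g` is quadratic, `‖y'ᵢ - y*‖²` and `g(y'ᵢ)`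
expand exactly, and the three-point inequality becomes the `i`-th summand of the claim with
`⟪∇g(y), y* - y⟫` replaced by its `i`-th block term; averaging over `i` gives the claim.
-/

open scoped RealInnerProductSpace Pointwise

noncomputable section

/-- A set function on the ground set `V = {1,…,n}` (modeled as `Fin n`) is submodular if
`F(A ∩ B) + F(A ∪ B) ≤ F(A) + F(B)` for all `A, B ⊆ V`. -/
def Submodular {n : ℕ} (F : Finset (Fin n) → ℝ) : Prop :=
  ∀ A B : Finset (Fin n), F (A ∩ B) + F (A ∪ B) ≤ F A + F B

/-- The base polytope `B(F) = {w ∈ ℝⁿ | ∀ A ⊆ V, w(A) ≤ F(A), and w(V) = F(V)}`. -/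
def basePolytope (n : ℕ) (F : Finset (Fin n) → ℝ) : Set (EuclideanSpace ℝ (Fin n)) :=
  {w | (∀ A : Finset (Fin n), ∑ i ∈ A, w i ≤ F A) ∧ (∑ i, w i = F Finset.univ)}

/-- `ℝ^{nr}` with the Euclidean norm, written in `r` blocks of `n` coordinates. -/
abbrev Vec (n r : ℕ) := PiLp 2 (fun _ : Fin r => EuclideanSpace ℝ (Fin n))

/-- The feasible set `𝒴 = ∏ᵢ B(Fᵢ)` of (Prox-DSM). -/
def feas (n r : ℕ) (F : Fin r → Finset (Fin n) → ℝ) : Set (Vec n r) :=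
  {y | ∀ i, y i ∈ basePolytope n (F i)}

/-- The objective `g(y) = ‖∑ᵢ y⁽ⁱ⁾‖²` of (Prox-DSM). -/
def g (n r : ℕ) (y : Vec n r) : ℝ := ‖∑ i, y i‖ ^ 2

/-- The `i`-th block of the gradient of `g`: `∇ᵢ g(y) = 2 ∑ⱼ y⁽ʲ⁾` (the same for every `i`). -/
def gradBlock (n r : ℕ) (y : Vec n r) : EuclideanSpace ℝ (Fin n) := (2 : ℝ) • ∑ j, y j

/-- The full gradient `∇g(y) ∈ ℝ^{nr}`, whose every block equals `2 ∑ⱼ y⁽ʲ⁾`. -/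
def gradg (n r : ℕ) (y : Vec n r) : Vec n r := WithLp.toLp 2 (fun _ => gradBlock n r y)

/-- `y` is an optimal solution of (Prox-DSM). -/
def IsOptimal (n r : ℕ) (F : Fin r → Finset (Fin n) → ℝ) (y : Vec n r) : Prop :=
  y ∈ feas n r F ∧ ∀ z ∈ feas n r F, g n r y ≤ g n r z

/-- The linear map `S = (1/√r)[Iₙ Iₙ ⋯ Iₙ]`, i.e. `S y = (1/√r) ∑ᵢ y⁽ⁱ⁾`. -/
def Smap (n r : ℕ) (y : Vec n r) : EuclideanSpace ℝ (Fin n) := (Real.sqrt r)⁻¹ • ∑ i, y i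

/-- Distance between two sets: `d(K₁, K₂) = inf{‖k₁ - k₂‖ : k₁ ∈ K₁, k₂ ∈ K₂}`. -/
def setDist {E : Type*} [PseudoMetricSpace E] (A B : Set E) : ℝ :=
  sInf ((fun p : E × E => dist p.1 p.2) '' (A ×ˢ B))

section ProxStep

variable {E : Type*} [NormedAddCommGroup E] [InnerProductSpace ℝ E]

theorem sq_norm_sub_add_sq_norm_le_of_isMinOn {K : Set E} (hK : Convex ℝ K) {c x z : E}
    (hx : x ∈ K) (hmin : IsMinOn (fun w => ‖c - w‖) K x) (hz : z ∈ K) :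
    ‖c - x‖ ^ 2 + ‖z - x‖ ^ 2 ≤ ‖c - z‖ ^ 2 := by
  have hangle : ⟪c - x, z - x⟫ ≤ 0 :=
    (norm_eq_iInf_iff_real_inner_le_zero hK hx).1 (hmin.iInf_eq hx).symm z hz
  rw [show c - z = (c - x) - (z - x) by abel, norm_sub_sq_real (c - x)]
  linarith

theorem inner_sub_add_norm_sub_sq (a b z : E) :
    ⟪a, z - b⟫ + ‖z - b‖ ^ 2 = ‖(b - (2⁻¹ : ℝ) • a) - z‖ ^ 2 - ‖a‖ ^ 2 / 4 := by
  rw [show b - (2⁻¹ : ℝ) • a - z = -((z - b) + (2⁻¹ : ℝ) • a) by abel, norm_neg,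
    norm_add_sq_real, real_inner_smul_right, norm_smul, mul_pow, real_inner_comm]
  norm_num
  ring

theorem prox_three_point {K : Set E} (hK : Convex ℝ K) {a b x z : E} (hx : x ∈ K)
    (hmin : IsMinOn (fun w => ⟪a, w - b⟫ + ‖w - b‖ ^ 2) K x) (hz : z ∈ K) :
    ⟪a, x - b⟫ + ‖x - b‖ ^ 2 + ‖z - x‖ ^ 2 ≤ ⟪a, z - b⟫ + ‖z - b‖ ^ 2 := by
  have hproj : IsMinOn (fun w => ‖(b - (2⁻¹ : ℝ) • a) - w‖) K x := isMinOn_iff.2 fun w hw => by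
    have := isMinOn_iff.1 hmin w hw
    simp only [inner_sub_add_norm_sub_sq a b] at this
    exact (pow_le_pow_iff_left₀ (norm_nonneg _) (norm_nonneg _) two_ne_zero).1 (by linarith)
  have := sq_norm_sub_add_sq_norm_le_of_isMinOn hK hx hproj hz
  rw [inner_sub_add_norm_sub_sq a b x, inner_sub_add_norm_sub_sq a b z]
  linarith

end ProxStep

theorem convex_basePolytope (n : ℕ) (F : Finset (Fin n) → ℝ) : Convex ℝ (basePolytope n F) := by
  rintro u ⟨hu, hu_univ⟩ v ⟨hv, hv_univ⟩ s t hs ht hst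
  have hsum (A : Finset (Fin n)) :
      ∑ k ∈ A, (s • u + t • v) k = s * ∑ k ∈ A, u k + t * ∑ k ∈ A, v k := by
    simp only [PiLp.add_apply, PiLp.smul_apply, smul_eq_mul, Finset.sum_add_distrib,
      Finset.mul_sum]
  refine ⟨fun A => ?_, ?_⟩
  · calc ∑ k ∈ A, (s • u + t • v) k ≤ s * F A + t * F A := by
          rw [hsum]; gcongr; exacts [hu A, hv A]
      _ = F A := by rw [← add_mul, hst, one_mul]
  · rw [hsum, hu_univ, hv_univ, ← add_mul, hst, one_mul]

section BlockUpdate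

variable {ι : Type*} [Fintype ι] {β : ι → Type*} [∀ i, NormedAddCommGroup (β i)]
  [∀ i, InnerProductSpace ℝ (β i)] {x y : PiLp 2 β} {i : ι}

theorem PiLp.inner_sub_of_eq_of_ne (h : ∀ j, j ≠ i → x j = y j) (w : PiLp 2 β) :
    ⟪w, x - y⟫ = ⟪w i, x i - y i⟫ := by
  rw [PiLp.inner_apply, Finset.sum_eq_single i (fun j _ hj => by simp [h j hj]) (by simp)]
  rfl

theorem PiLp.norm_sub_sq_of_eq_of_ne (h : ∀ j, j ≠ i → x j = y j) :
    ‖x - y‖ ^ 2 = ‖x i - y i‖ ^ 2 := by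
  rw [← real_inner_self_eq_norm_sq, ← real_inner_self_eq_norm_sq,
    PiLp.inner_sub_of_eq_of_ne h]
  rfl

end BlockUpdate

theorem Finset.sum_univ_eq_add_sub_of_eq_of_ne {ι M : Type*} [Fintype ι] [AddCommGroup M]
    {x y : ι → M} {i : ι} (h : ∀ j, j ≠ i → x j = y j) :
    ∑ j, x j = ∑ j, y j + (x i - y i) := by
  rw [← sub_eq_iff_eq_add', ← Finset.sum_sub_distrib,
    Finset.sum_eq_single i (fun j _ hj => by rw [h j hj, sub_self]) (by simp)]

theorem inner_gradg_sub (n r : ℕ) (y w v : Vec n r) :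
    ⟪gradg n r y, w - v⟫ = ∑ i, ⟪gradBlock n r y, w i - v i⟫ :=
  PiLp.inner_apply _ _

theorem block_update_progress {n r : ℕ} {y y₁ w : Vec n r} {i : Fin r}
    (hagree : ∀ j, j ≠ i → y₁ j = y j)
    (hthree : ⟪gradBlock n r y, y₁ i - y i⟫ + ‖y₁ i - y i‖ ^ 2 + ‖w i - y₁ i‖ ^ 2
      ≤ ⟪gradBlock n r y, w i - y i⟫ + ‖w i - y i‖ ^ 2) :
    ‖y₁ - w‖ ^ 2 + g n r y₁ - g n r w
      ≤ ‖y - w‖ ^ 2 + g n r y - g n r w + ⟪gradBlock n r y, w i - y i⟫ := by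
  have hdist : ‖y₁ - w‖ ^ 2
      = ‖y - w‖ ^ 2 - 2 * ⟪w i - y i, y₁ i - y i⟫ + ‖y₁ i - y i‖ ^ 2 := by
    rw [show y₁ - w = (y - w) + (y₁ - y) by abel, norm_add_sq_real,
      PiLp.inner_sub_of_eq_of_ne hagree, PiLp.norm_sub_sq_of_eq_of_ne hagree,
      PiLp.sub_apply, ← neg_sub (w i), inner_neg_left]
    ring
  have hobj : g n r y₁ = g n r y + ⟪gradBlock n r y, y₁ i - y i⟫ + ‖y₁ i - y i‖ ^ 2 := by
    rw [g, g, gradBlock, Finset.sum_univ_eq_add_sub_of_eq_of_ne hagree, norm_add_sq_real,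
      real_inner_smul_left]
  have hsplit : ‖w i - y₁ i‖ ^ 2
      = ‖w i - y i‖ ^ 2 - 2 * ⟪w i - y i, y₁ i - y i⟫ + ‖y₁ i - y i‖ ^ 2 := by
    rw [show w i - y₁ i = (w i - y i) - (y₁ i - y i) by abel, norm_sub_sq_real]
  linarith

theorem statement6_general (n r : ℕ) (hr : 1 ≤ r)
    (F : Fin r → Finset (Fin n) → ℝ)
    (y : Vec n r) (y' : Fin r → Vec n r) (ystar : Vec n r)
    (hagree : ∀ i : Fin r, ∀ j, j ≠ i → y' i j = y j)
    (hmem : ∀ i : Fin r, y' i i ∈ basePolytope n (F i))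
    (hmin : ∀ i : Fin r, ∀ z ∈ basePolytope n (F i),
      ⟪gradBlock n r y, y' i i - y i⟫ + ‖y' i i - y i‖ ^ 2
        ≤ ⟪gradBlock n r y, z - y i⟫ + ‖z - y i‖ ^ 2)
    (hopt : IsOptimal n r F ystar) :
    (1 / (r : ℝ)) * ∑ i : Fin r, (‖y' i - ystar‖ ^ 2 + g n r (y' i) - g n r ystar)
      ≤ ‖y - ystar‖ ^ 2 + g n r y - g n r ystar
          + (1 / (r : ℝ)) * ⟪gradg n r y, ystar - y⟫ := by
  have hblock (i : Fin r) := block_update_progress (hagree i)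
    (prox_three_point (convex_basePolytope n (F i)) (hmem i) (isMinOn_iff.2 (hmin i))
      (hopt.1 i))
  have hsum := Finset.sum_le_sum fun i (_ : i ∈ Finset.univ) => hblock i
  rw [Finset.sum_add_distrib, Finset.sum_const, Finset.card_univ, Fintype.card_fin,
    nsmul_eq_mul, ← inner_gradg_sub] at hsum
  have hr₀ : (0 : ℝ) < r := by exact_mod_cast hr
  calc (1 / (r : ℝ)) * ∑ i, (‖y' i - ystar‖ ^ 2 + g n r (y' i) - g n r ystar)
      ≤ (1 / (r : ℝ)) * (r * (‖y - ystar‖ ^ 2 + g n r y - g n r ystar)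
          + ⟪gradg n r y, ystar - y⟫) := by gcongr
    _ = _ := by field_simp

/-- Expected progress of one random block update: with `y'_i` the result
of updating block `i` of `y` by the block minimizer, `y*` an optimal solution of
(Prox-DSM) closest to `y`, and `g* = g(y*)` the optimal value,
`(1/r) ∑ᵢ (‖y'_i - y*‖² + g(y'_i) - g*) ≤ ‖y - y*‖² + g(y) - g* + (1/r)⟨∇g(y), y* - y⟩`. -/
theorem statement6 (n r : ℕ) (hn : 1 ≤ n) (hr : 1 ≤ r)
    (F : Fin r → Finset (Fin n) → ℝ)
    (hsub : ∀ i, Submodular (F i)) (hnorm : ∀ i, F i ∅ = 0)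
    (y : Vec n r) (y' : Fin r → Vec n r) (ystar : Vec n r)
    (hy : y ∈ feas n r F)
    (hagree : ∀ i : Fin r, ∀ j, j ≠ i → y' i j = y j)
    (hmem : ∀ i : Fin r, y' i i ∈ basePolytope n (F i))
    (hmin : ∀ i : Fin r, ∀ z ∈ basePolytope n (F i),
      ⟪gradBlock n r y, y' i i - y i⟫ + ‖y' i i - y i‖ ^ 2
        ≤ ⟪gradBlock n r y, z - y i⟫ + ‖z - y i‖ ^ 2)
    (hopt : IsOptimal n r F ystar)
    (hclosest : ∀ z : Vec n r, IsOptimal n r F z → ‖y - ystar‖ ≤ ‖y - z‖) :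
    (1 / (r : ℝ)) * ∑ i : Fin r, (‖y' i - ystar‖ ^ 2 + g n r (y' i) - g n r ystar)
      ≤ ‖y - ystar‖ ^ 2 + g n r y - g n r ystar
          + (1 / (r : ℝ)) * ⟪gradg n r y, ystar - y⟫ :=
  statement6_general n r hr F y y' ystar hagree hmem hmin hopt
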